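/- arXiv:2509.15769 — 2 statements merged into one kernel-verified Lean document; each statement's English description precedes it below -/
import Mathlib

section
/- For every real r > 2 and every positive integer n, there exists θ₂ ∈ [−1, 1] such that (1/n) ∑_{k=n}^∞ 1/k^{r-1} − ∑_{k=n}^∞ 1/k^r = (1/n^r) · ( n/((r-1)(r-2)) + θ₂ ). -/
/-!
By the mean value theorem, `(s - 1) / (x + 1) ^ s ≤ x ^ (1 - s) - (x + 1) ^ (1 - s) ≤ (s - 1) / x ^ s`
for `x > 0`; telescoping over `x = N + k` gives
`N / (s - 1) ≤ N ^ s * ∑ₖ 1 / (N + k) ^ s ≤ 1 + N / (s - 1)`.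
Applied with `s = r - 1` and `s = r`, the main terms combine to
`N / (r - 2) - N / (r - 1) = N / ((r - 1) * (r - 2))` and the two errors, each in `[0, 1]`,
differ by at most `1`.
-/

open Real Set Filter Topology

lemma hasSum_sub_succ_of_antitone {f : ℕ → ℝ} (hf : Antitone f) (hlim : Tendsto f atTop (𝓝 0)) :
    HasSum (fun k => f k - f (k + 1)) (f 0) := by
  rw [hasSum_iff_tendsto_nat_of_nonneg fun k => sub_nonneg.2 (hf k.le_succ)]
  simp_rw [Finset.sum_range_sub']
  simpa using hlim.const_sub (f 0)

section

variable {s x N : ℝ}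

lemma rpow_one_sub_sub_rpow_one_sub_mem_Icc (hs : 1 ≤ s) (hx : 0 < x) :
    x ^ (1 - s) - (x + 1) ^ (1 - s) ∈ Icc ((s - 1) / (x + 1) ^ s) ((s - 1) / x ^ s) := by
  have hderiv : ∀ t ∈ Ioo x (x + 1), HasDerivAt (· ^ (1 - s)) ((1 - s) * t ^ (-s)) t := by
    intro t ht
    simpa using hasDerivAt_rpow_const (p := 1 - s) (Or.inl (hx.trans ht.1).ne')
  obtain ⟨c, ⟨hxc, hcx⟩, hc⟩ := exists_hasDerivAt_eq_slope (· ^ (1 - s)) _ (lt_add_one x)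
    (continuousOn_id.rpow_const fun t ht => Or.inl (hx.trans_le ht.1).ne') hderiv
  have hc0 : 0 < c := hx.trans hxc
  have hmvt : x ^ (1 - s) - (x + 1) ^ (1 - s) = (s - 1) / c ^ s := by
    rw [add_sub_cancel_left, div_one, rpow_neg hc0.le] at hc
    rw [div_eq_mul_inv]
    linarith
  rw [hmvt]
  constructor <;> gcongr

lemma hasSum_rpow_one_sub_telescope (hs : 1 < s) (hN : 0 < N) :
    HasSum (fun k : ℕ => (N + k) ^ (1 - s) - (N + (k + 1 : ℕ)) ^ (1 - s)) (N ^ (1 - s)) := by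
  have hanti : Antitone fun k : ℕ => (N + k) ^ (1 - s) := fun i j hij =>
    rpow_le_rpow_of_nonpos (by positivity) (by gcongr) (by linarith)
  have hlim : Tendsto (fun k : ℕ => (N + k) ^ (1 - s)) atTop (𝓝 0) := by
    have := (tendsto_rpow_neg_atTop (by linarith : 0 < s - 1)).comp
      (tendsto_atTop_add_const_left _ N tendsto_natCast_atTop_atTop)
    simpa [Function.comp_def] using this
  simpa using hasSum_sub_succ_of_antitone hanti hlim

lemma summable_one_div_add_rpow (hs : 1 < s) (hN : 0 < N) :
    Summable fun k : ℕ => 1 / (N + k) ^ s := by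
  have := (summable_one_div_nat_add_rpow N s).2 hs
  refine this.congr fun k => ?_
  rw [abs_of_pos (by positivity), add_comm]

lemma rpow_one_sub_le_sub_one_mul_tsum (hs : 1 < s) (hN : 0 < N) :
    N ^ (1 - s) ≤ (s - 1) * ∑' k : ℕ, 1 / (N + k) ^ s := by
  rw [← tsum_mul_left]
  refine hasSum_le (fun k => ?_) (hasSum_rpow_one_sub_telescope hs hN)
    ((summable_one_div_add_rpow hs hN).mul_left _).hasSum
  have := (rpow_one_sub_sub_rpow_one_sub_mem_Icc hs.le (by positivity : 0 < N + k)).2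
  push_cast
  rw [← add_assoc, mul_one_div]
  exact this

lemma sub_one_mul_tsum_le (hs : 1 < s) (hN : 0 < N) :
    (s - 1) * ∑' k : ℕ, 1 / (N + k) ^ s ≤ (s - 1) / N ^ s + N ^ (1 - s) := by
  have hsum := summable_one_div_add_rpow hs hN
  rw [hsum.tsum_eq_zero_add, mul_add, ← tsum_mul_left]
  gcongr
  · rw [Nat.cast_zero, add_zero, mul_one_div]
  refine hasSum_le (fun k => ?_) ((summable_nat_add_iff 1).2 hsum |>.mul_left _).hasSum
    (hasSum_rpow_one_sub_telescope hs hN)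
  have := (rpow_one_sub_sub_rpow_one_sub_mem_Icc hs.le (by positivity : 0 < N + k)).1
  push_cast at this ⊢
  rw [← add_assoc, mul_one_div]
  exact this

lemma rpow_mul_tsum_mem_Icc (hs : 1 < s) (hN : 0 < N) :
    N ^ s * ∑' k : ℕ, 1 / (N + k) ^ s ∈ Icc (N / (s - 1)) (1 + N / (s - 1)) := by
  have hs1 : 0 < s - 1 := by linarith
  have hNs : 0 < N ^ s := by positivity
  have hlower := rpow_one_sub_le_sub_one_mul_tsum hs hN
  have hupper := sub_one_mul_tsum_le hs hN
  rw [rpow_sub hN, rpow_one] at hlower hupper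
  rw [div_le_iff₀ hNs] at hlower
  rw [← add_div, le_div_iff₀ hNs] at hupper
  constructor
  · rw [div_le_iff₀ hs1]
    linarith
  · rw [one_add_div hs1.ne', le_div_iff₀ hs1]
    linarith

end

theorem diff_estimate (r : ℝ) (hr : 2 < r) (n : ℕ) (hn : 0 < n) :
    ∃ θ₂ ∈ Set.Icc (-1 : ℝ) 1,
      (1 / (n : ℝ)) * ∑' k : ℕ, 1 / ((n : ℝ) + k) ^ (r - 1) -
          ∑' k : ℕ, 1 / ((n : ℝ) + k) ^ r =
        (1 / (n : ℝ) ^ r) * ((n : ℝ) / ((r - 1) * (r - 2)) + θ₂) := by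
  have hN : (0 : ℝ) < n := by exact_mod_cast hn
  obtain ⟨hA₁, hA₂⟩ := rpow_mul_tsum_mem_Icc (by linarith : 1 < r - 1) hN
  obtain ⟨hB₁, hB₂⟩ := rpow_mul_tsum_mem_Icc (by linarith : 1 < r) hN
  rw [show r - 1 - 1 = r - 2 by ring] at hA₁ hA₂
  have hsplit : (n : ℝ) / (r - 2) - n / (r - 1) = n / ((r - 1) * (r - 2)) := by
    field_simp [(by linarith : r - 2 ≠ 0), (by linarith : r - 1 ≠ 0)]
    ring
  refine ⟨(n : ℝ) ^ (r - 1) * ∑' k : ℕ, 1 / ((n : ℝ) + k) ^ (r - 1) -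
    (n : ℝ) ^ r * ∑' k : ℕ, 1 / ((n : ℝ) + k) ^ r - n / ((r - 1) * (r - 2)),
    ⟨by linarith, by linarith⟩, ?_⟩
  rw [rpow_sub_one hN.ne']
  field_simp
  ring
end

section
/- For every real r > 2, θ ∈ [−1, 0], and positive integer n, there exist θ₃ ∈ [−1, 2] and θ₄ ∈ (−2, 1) such that ∑_{k=n}^∞ 1/k^r + (θ/n) ∑_{k=1}^∞ k/(k+n)^r = (1/n^r)·( (n/r)(1 + θ₄/(r−2)) + θ₃ ). -/
/-! Write `B = n^r ζ(r, n)` and `C = n^(r-1) ζ(r-1, n)` with `ζ(s, a) = ∑ₖ (k + a)^(-s)`.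
Since `k / (k + n)^r = (k + n)^(1-r) - n (k + n)^(-r)`, the left-hand side equals
`n^(-r) (B + θ (C - B))` with `C - B ≥ 0`. The integral test against `∫ₙ^∞ t^(-s) dt` gives
`n/(s-1) ≤ n^s ζ(s, n) ≤ 1 + n/(s-1)`, so `B + θ (C - B)` lies in
`[2n/(r-1) - 1 - n/(r-2), 1 + n/(r-1)]`. For `r > 2` this interval sits strictly inside
`[-1, 2] + (n/r)(1 + (-2, 1)/(r-2))`, which yields `θ₃` and `θ₄`. -/

open Real Set Filter Topology MeasureTheory

/- Mathlib's `HurwitzZeta.hurwitzZeta` takes `a` modulo `1`, so it does not give `ζ(s, n)` for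
a natural number `n`. -/
noncomputable def realHurwitzZeta (s a : ℝ) : ℝ := ∑' k : ℕ, ((k : ℝ) + a) ^ (-s)

section RealHurwitzZeta

variable {s a : ℝ}

lemma antitoneOn_add_rpow_neg (hs : 0 ≤ s) (ha : 0 < a) :
    AntitoneOn (fun x : ℝ => (x + a) ^ (-s)) (Ici 0) := fun x hx _ _ hxy =>
  rpow_le_rpow_of_nonpos (by linarith [mem_Ici.mp hx]) (by linarith) (neg_nonpos.mpr hs)

lemma integral_Ioi_add_rpow_neg (hs : 1 < s) (ha : 0 < a) :
    ∫ x in Ioi (0 : ℝ), (x + a) ^ (-s) = a ^ (1 - s) / (s - 1) := by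
  have h1s : 1 - s ≠ 0 := by linarith
  have hderiv : ∀ x ∈ Ici (0 : ℝ),
      HasDerivAt (fun t => (t + a) ^ (1 - s) / (1 - s)) ((x + a) ^ (-s)) x := by
    intro x hx
    have hxa : x + a ≠ 0 := by linarith [mem_Ici.mp hx]
    refine ((((hasDerivAt_id' x).add_const a).rpow_const (Or.inl hxa)).div_const
      (1 - s)).congr_deriv ?_
    rw [one_mul, mul_div_cancel_left₀ _ h1s, sub_sub_cancel_left]
  have hlim : Tendsto (fun t : ℝ => (t + a) ^ (1 - s) / (1 - s)) atTop (𝓝 0) := by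
    have h := (tendsto_rpow_neg_atTop (by linarith : 0 < s - 1)).comp
      (tendsto_atTop_add_const_right atTop a tendsto_id)
    simpa [Function.comp_def] using h.div_const (1 - s)
  rw [integral_Ioi_of_hasDerivAt_of_tendsto' hderiv
    (integrableOn_add_rpow_Ioi_of_lt (by linarith) (by linarith)) hlim, zero_add, zero_sub,
    ← div_neg, neg_sub]

lemma integrableOn_add_rpow_neg (hs : 1 < s) (ha : 0 < a) :
    IntegrableOn (fun x : ℝ => (x + a) ^ (-s)) (Ioi 0) :=
  integrableOn_add_rpow_Ioi_of_lt (by linarith) (by linarith)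

lemma add_rpow_neg_nonneg (ha : 0 < a) : ∀ x ∈ Ioi (0 : ℝ), 0 ≤ (x + a) ^ (-s) :=
  fun x hx => rpow_nonneg (by linarith [mem_Ioi.mp hx]) _

lemma summable_natCast_add_rpow_neg (hs : 1 < s) (ha : 0 < a) :
    Summable (fun k : ℕ => ((k : ℝ) + a) ^ (-s)) :=
  (antitoneOn_add_rpow_neg (by linarith) ha).summable_of_integrableOn_Ioi_zero
    (integrableOn_add_rpow_neg hs ha) (add_rpow_neg_nonneg ha)

lemma div_sub_one_le_realHurwitzZeta (hs : 1 < s) (ha : 0 < a) :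
    a ^ (1 - s) / (s - 1) ≤ realHurwitzZeta s a := by
  rw [← integral_Ioi_add_rpow_neg hs ha]
  exact (antitoneOn_add_rpow_neg (by linarith) ha).integral_le_tsum
    (summable_natCast_add_rpow_neg hs ha) (add_rpow_neg_nonneg ha)

lemma realHurwitzZeta_le (hs : 1 < s) (ha : 0 < a) :
    realHurwitzZeta s a ≤ a ^ (-s) + a ^ (1 - s) / (s - 1) := by
  rw [← integral_Ioi_add_rpow_neg hs ha]
  simpa only [realHurwitzZeta, zero_add] using
    (antitoneOn_add_rpow_neg (by linarith) ha).tsum_le_integral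
      (integrableOn_add_rpow_neg hs ha) (add_rpow_neg_nonneg ha)

lemma rpow_mul_realHurwitzZeta_mem_Icc (hs : 1 < s) (ha : 0 < a) :
    a ^ s * realHurwitzZeta s a ∈ Icc (a / (s - 1)) (1 + a / (s - 1)) := by
  have hpos : 0 < a ^ s := rpow_pos_of_pos ha s
  have hneg : a ^ s * a ^ (-s) = 1 := by rw [← rpow_add ha, add_neg_cancel, rpow_zero]
  have hone : a ^ s * a ^ (1 - s) = a := by rw [← rpow_add ha, add_sub_cancel, rpow_one]
  constructor
  · calc a / (s - 1) = a ^ s * (a ^ (1 - s) / (s - 1)) := by rw [mul_div_assoc', hone]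
      _ ≤ _ := mul_le_mul_of_nonneg_left (div_sub_one_le_realHurwitzZeta hs ha) hpos.le
  · calc a ^ s * realHurwitzZeta s a ≤ a ^ s * (a ^ (-s) + a ^ (1 - s) / (s - 1)) :=
          mul_le_mul_of_nonneg_left (realHurwitzZeta_le hs ha) hpos.le
      _ = 1 + a / (s - 1) := by rw [mul_add, mul_div_assoc', hneg, hone]

lemma tsum_succ_div_add_rpow (hs : 2 < s) (ha : 0 < a) :
    ∑' k : ℕ, ((k : ℝ) + 1) / ((k : ℝ) + 1 + a) ^ s =
      realHurwitzZeta (s - 1) a - a * realHurwitzZeta s a := by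
  have hterm : ∀ k : ℕ, ((k : ℝ) + a) ^ (-(s - 1)) - a * ((k : ℝ) + a) ^ (-s) =
      (k : ℝ) / ((k : ℝ) + a) ^ s := by
    intro k
    have hka : 0 < (k : ℝ) + a := by positivity
    rw [show -(s - 1) = 1 + -s by ring, rpow_add hka, rpow_one, rpow_neg hka.le]
    field_simp
    ring
  have hsum : HasSum (fun k : ℕ => (k : ℝ) / ((k : ℝ) + a) ^ s)
      (realHurwitzZeta (s - 1) a - a * realHurwitzZeta s a) := by
    simp_rw [← hterm]
    exact ((summable_natCast_add_rpow_neg (by linarith) ha).hasSum.sub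
      ((summable_natCast_add_rpow_neg (by linarith) ha).hasSum.mul_left a))
  rw [← hsum.tsum_eq, hsum.summable.tsum_eq_zero_add]
  simp [add_right_comm]

lemma rpow_mul_realHurwitzZeta_le (hs : 2 < s) (ha : 0 < a) :
    a ^ s * realHurwitzZeta s a ≤ a ^ (s - 1) * realHurwitzZeta (s - 1) a := by
  have hD : 0 ≤ realHurwitzZeta (s - 1) a - a * realHurwitzZeta s a :=
    tsum_succ_div_add_rpow hs ha ▸ tsum_nonneg fun k => by positivity
  have hpow : a ^ s = a ^ (s - 1) * a := by rw [← rpow_add_one ha.ne', sub_add_cancel]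
  rw [hpow, mul_assoc]
  exact mul_le_mul_of_nonneg_left (by linarith) (rpow_nonneg ha.le _)

lemma tsum_add_div_mul_tsum_eq (hs : 2 < s) (ha : 0 < a) (θ : ℝ) :
    (∑' k : ℕ, 1 / (a + k) ^ s) + (θ / a) * ∑' k : ℕ, ((k : ℝ) + 1) / ((k : ℝ) + 1 + a) ^ s =
      1 / a ^ s * (a ^ s * realHurwitzZeta s a +
        θ * (a ^ (s - 1) * realHurwitzZeta (s - 1) a - a ^ s * realHurwitzZeta s a)) := by
  have hzeta : ∑' k : ℕ, 1 / (a + k) ^ s = realHurwitzZeta s a :=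
    tsum_congr fun k => by rw [one_div, add_comm, rpow_neg (by positivity)]
  rw [hzeta, tsum_succ_div_add_rpow hs ha, rpow_sub_one ha.ne']
  field_simp

end RealHurwitzZeta

lemma exists_mem_Icc_sub_mem_Ioo {K : Type*} [Field K] [LinearOrder K] [IsStrictOrderedRing K]
    {α β p q x : K} (hαβ : α ≤ β) (hpq : p < q)
    (hlo : p + α < x) (hhi : x < q + β) : ∃ t ∈ Icc α β, x - t ∈ Ioo p q := by
  by_cases hα : x - (p + q) / 2 < α
  · exact ⟨α, ⟨le_rfl, hαβ⟩, by linarith, by linarith⟩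
  by_cases hβ : β < x - (p + q) / 2
  · exact ⟨β, ⟨hαβ, le_rfl⟩, by linarith, by linarith⟩
  exact ⟨x - (p + q) / 2, ⟨by linarith, by linarith⟩, by linarith, by linarith⟩

lemma exists_mem_Ioo_eq_mul_one_add_div {a r x : ℝ} (ha : 0 < a) (hr : 2 < r)
    (hx : x ∈ Ioo (a / r * (1 + -2 / (r - 2))) (a / r * (1 + 1 / (r - 2)))) :
    ∃ θ ∈ Ioo (-2 : ℝ) 1, x = a / r * (1 + θ / (r - 2)) := by
  have hmono : StrictMono (fun θ : ℝ => a / r * (1 + θ / (r - 2))) := fun θ θ' h => by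
    have : 0 < r - 2 := by linarith
    dsimp only
    gcongr
  have hsolve : a / r * (1 + (x / (a / r) - 1) * (r - 2) / (r - 2)) = x := by
    field_simp [show r - 2 ≠ 0 by linarith]
    ring
  refine ⟨(x / (a / r) - 1) * (r - 2), ⟨?_, ?_⟩, hsolve.symm⟩
  · exact hmono.lt_iff_lt.mp (by rw [hsolve]; exact hx.1)
  · exact hmono.lt_iff_lt.mp (by rw [hsolve]; exact hx.2)

lemma exists_eq_div_mul_one_add_div_add {a r x : ℝ} (ha : 0 < a) (hr : 2 < r)
    (hlo : 2 * (a / (r - 1)) - (1 + a / (r - 2)) ≤ x) (hhi : x ≤ 1 + a / (r - 1)) :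
    ∃ θ₃ ∈ Icc (-1 : ℝ) 2, ∃ θ₄ ∈ Ioo (-2 : ℝ) 1, x = a / r * (1 + θ₄ / (r - 2)) + θ₃ := by
  have hr1 : 0 < r - 1 := by linarith
  have hr2 : 0 < r - 2 := by linarith
  have hr0 : 0 < r := by linarith
  have hp : a / r * (1 + -2 / (r - 2)) + -1 < 2 * (a / (r - 1)) - (1 + a / (r - 2)) := by
    rw [← sub_pos]
    field_simp
    nlinarith
  have hq : 1 + a / (r - 1) < a / r * (1 + 1 / (r - 2)) + 2 := by
    rw [← sub_pos]
    field_simp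
    nlinarith [mul_pos (mul_pos hr0 hr1) hr2]
  obtain ⟨θ₃, hθ₃, hx⟩ := exists_mem_Icc_sub_mem_Ioo (by norm_num)
    (by gcongr; norm_num) (hp.trans_le hlo) (hhi.trans_lt hq)
  obtain ⟨θ₄, hθ₄, hθ₄eq⟩ := exists_mem_Ioo_eq_mul_one_add_div ha hr hx
  exact ⟨θ₃, hθ₃, θ₄, hθ₄, by linarith⟩

theorem combined_estimate (r θ : ℝ) (hr : 2 < r) (hθ : θ ∈ Set.Icc (-1 : ℝ) 0)
    (n : ℕ) (hn : 0 < n) :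
    ∃ θ₃ ∈ Set.Icc (-1 : ℝ) 2, ∃ θ₄ ∈ Set.Ioo (-2 : ℝ) 1,
      (∑' k : ℕ, 1 / ((n : ℝ) + k) ^ r) +
          (θ / n) * ∑' k : ℕ, ((k : ℝ) + 1) / (((k : ℝ) + 1 + n) ^ r) =
        (1 / (n : ℝ) ^ r) * (((n : ℝ) / r) * (1 + θ₄ / (r - 2)) + θ₃) := by
  have ha : (0 : ℝ) < n := Nat.cast_pos.mpr hn
  obtain ⟨hB₁, hB₂⟩ := rpow_mul_realHurwitzZeta_mem_Icc (s := r) (by linarith) ha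
  obtain ⟨hC₁, hC₂⟩ := rpow_mul_realHurwitzZeta_mem_Icc (s := r - 1) (by linarith) ha
  rw [sub_sub, one_add_one_eq_two] at hC₁ hC₂
  have hBC := rpow_mul_realHurwitzZeta_le hr ha
  obtain ⟨θ₃, hθ₃, θ₄, hθ₄, hx⟩ := exists_eq_div_mul_one_add_div_add ha hr
    (x := (n : ℝ) ^ r * realHurwitzZeta r n +
      θ * ((n : ℝ) ^ (r - 1) * realHurwitzZeta (r - 1) n - (n : ℝ) ^ r * realHurwitzZeta r n))
    (by nlinarith [hθ.1]) (by nlinarith [hθ.2])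
  exact ⟨θ₃, hθ₃, θ₄, hθ₄, by rw [tsum_add_div_mul_tsum_eq hr ha θ, hx]⟩
end
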